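/- For the operator H_k(γ) = I − γ D^k on P_n (1 ≤ k ≤ n, γ ∈ ℂ), the root radius of H_k(γ)φ_n equals (|γ| n!/(n−k)!)^{1/k}; consequently K_h(H_k(γ)) = (|γ| n!/(n−k)!)^{1/k}, where K_h(T) = sup over nonconstant f ∈ P_n of the maximum over roots v of Tf of the distance from v to the root set of f. -/

import Mathlib

open Polynomial

/-- `P n` is the space of complex polynomials of degree at most `n`. -/
noncomputable def Pn (n : ℕ) : Submodule ℂ (Polynomial ℂ) := Polynomial.degreeLT ℂ (n + 1)

noncomputable instance instPnEndAddCommGroup (n : ℕ) : AddCommGroup (Module.End ℂ (Pn n)) :=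
  LinearMap.addCommGroup

noncomputable instance instPnEndRing (n : ℕ) : Ring (Module.End ℂ (Pn n)) := Module.End.instRing

/-- The differentiation operator on `Pn n`. -/
noncomputable def Dop (n : ℕ) : Module.End ℂ (Pn n) :=
  (Polynomial.derivative (R := ℂ)).restrict (p := Pn n) (q := Pn n)
    (fun f hf => by
      simp only [Pn, Polynomial.mem_degreeLT] at *
      exact lt_of_le_of_lt (Polynomial.degree_derivative_le) hf)

/-- `calD n` is the span of `I, D, D^2, ..., D^n` in `L(Pn n)`. -/
noncomputable def calD (n : ℕ) : Submodule ℂ (Module.End ℂ (Pn n)) :=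
  Submodule.span ℂ (Set.range fun k : Fin (n + 1) => (Dop n) ^ (k : ℕ))

/-- `φ_k(z) = z^k / k!` as an element of `Pn n` (for `k ≤ n`). -/
noncomputable def phiP (n k : ℕ) (h : k ≤ n) : Pn n :=
  ⟨Polynomial.C (((Nat.factorial k : ℂ))⁻¹) * Polynomial.X ^ k, by
    rw [Pn, Polynomial.mem_degreeLT]
    exact lt_of_le_of_lt (Polynomial.degree_C_mul_X_pow_le _ _)
      (by exact_mod_cast Nat.lt_succ_of_le h)⟩

/-- The root radius of a polynomial: the maximum (supremum) of the moduli of its roots. -/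
noncomputable def rootRadius (p : Polynomial ℂ) : ℝ :=
  sSup ((fun z : ℂ => ‖z‖) '' {z : ℂ | p.IsRoot z})

/-- The set of roots of a polynomial. -/
def Zset (p : Polynomial ℂ) : Set ℂ := {z : ℂ | p.IsRoot z}

/-- The (asymmetric Hausdorff) distance `d_h(A, B) = sup_{y ∈ B} inf_{x ∈ A} |x - y|`. -/
noncomputable def dh (A B : Set ℂ) : ℝ := sSup ((fun y => Metric.infDist y A) '' B)

/-- `K_h(T) = sup { d_h(Z(f), Z(Tf)) : f ∈ P_n nonconstant }`. -/
noncomputable def Kh (n : ℕ) (T : Module.End ℂ (Pn n)) : ℝ :=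
  sSup {d : ℝ | ∃ f : Pn n, 0 < (f : Polynomial ℂ).degree ∧
    d = dh (Zset (f : Polynomial ℂ)) (Zset ((T f : Pn n) : Polynomial ℂ))}

/-! If `v` is a root of `f - γ f⁽ᵏ⁾` but not of `f ∈ Pₙ`, and `d` is the distance from `v` to the
roots of `f`, then `|f(v)| dᵏ = |γ| |f⁽ᵏ⁾(v)| dᵏ ≤ |γ| n(n-1)⋯(n-k+1) |f(v)|`: peel off one root `z`
at a time, using `((X - z) g)⁽ᵏ⁺¹⁾ = (k+1) g⁽ᵏ⁾ + (X - z) g⁽ᵏ⁺¹⁾` and `d ≤ |v - z|`. Hence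
`dᵏ ≤ |γ| n!/(n-k)!`. The bound is attained at `f = φₙ`: its only root is `0`, and the roots of
`H_k(γ)φₙ ∝ zⁿ⁻ᵏ (zᵏ - γ n!/(n-k)!)` have modulus at most `(|γ| n!/(n-k)!)^(1/k)`, with equality
for the `k`-th roots of `γ n!/(n-k)!`. -/

theorem Nat.succ_descFactorial_succ_eq_add (N k : ℕ) :
    (N + 1).descFactorial (k + 1) = (k + 1) * N.descFactorial k + N.descFactorial (k + 1) := by
  rw [Nat.succ_descFactorial_succ, Nat.descFactorial_succ, ← Nat.add_mul]
  rcases le_or_gt k N with hkN | hNk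
  · congr 1
    omega
  · simp [Nat.descFactorial_eq_zero_iff_lt.2 hNk]

namespace Polynomial

theorem iterate_derivative_X_sub_C_mul {R : Type*} [CommRing R] (z : R) (g : R[X]) (k : ℕ) :
    derivative^[k + 1] ((X - C z) * g) =
      (k + 1) • derivative^[k] g + (X - C z) * derivative^[k + 1] g := by
  induction k with
  | zero => simp [derivative_mul]
  | succ k ih =>
    rw [Function.iterate_succ_apply', ih]
    simp only [derivative_add, derivative_smul, derivative_mul, derivative_sub, derivative_X,
      derivative_C, sub_zero, one_mul, ← Function.iterate_succ_apply' derivative]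
    rw [succ_nsmul _ (k + 1)]
    abel

theorem norm_eval_iterate_derivative_mul_pow_le {f : ℂ[X]} {v : ℂ} {d : ℝ} (hd : 0 ≤ d)
    (hroots : ∀ z, f.IsRoot z → d ≤ ‖v - z‖) (k : ℕ) :
    ‖(derivative^[k] f).eval v‖ * d ^ k ≤ f.natDegree.descFactorial k * ‖f.eval v‖ := by
  induction hN : f.natDegree generalizing f k with
  | zero =>
    rcases k with _ | k
    · simp
    · rw [eq_C_of_natDegree_eq_zero hN, iterate_derivative_C k.succ_pos]
      simp
  | succ N ih =>
    have hdeg : 0 < f.natDegree := by omega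
    obtain ⟨z, hz⟩ := Complex.exists_root (natDegree_pos_iff_degree_pos.1 hdeg)
    obtain ⟨g, rfl⟩ := dvd_iff_isRoot.2 hz
    have hg0 : g ≠ 0 := by rintro rfl; simp at hN
    have hgN : g.natDegree = N := by
      rw [natDegree_mul (X_sub_C_ne_zero z) hg0, natDegree_X_sub_C] at hN
      omega
    have hgroots : ∀ w, g.IsRoot w → d ≤ ‖v - w‖ := fun w hw =>
      hroots w (by simp [hw.eq_zero])
    have hdz : d ≤ ‖v - z‖ := hroots z hz
    rcases k with _ | k
    · simp
    have hk := ih hgroots k hgN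
    have hk1 := ih hgroots (k + 1) hgN
    rw [iterate_derivative_X_sub_C_mul, Nat.succ_descFactorial_succ_eq_add]
    calc ‖((k + 1) • derivative^[k] g + (X - C z) * derivative^[k + 1] g).eval v‖ * d ^ (k + 1)
        ≤ ((k + 1) * ‖(derivative^[k] g).eval v‖ + ‖v - z‖ * ‖(derivative^[k + 1] g).eval v‖)
            * d ^ (k + 1) := by
          gcongr
          simp only [nsmul_eq_mul, eval_add, eval_mul, eval_sub, eval_X, eval_C, eval_natCast]
          refine (norm_add_le _ _).trans_eq ?_
          rw [norm_mul, norm_mul, Complex.norm_natCast]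
          push_cast
          rfl
      _ = (k + 1) * (‖(derivative^[k] g).eval v‖ * d ^ k) * d
            + ‖v - z‖ * (‖(derivative^[k + 1] g).eval v‖ * d ^ (k + 1)) := by ring
      _ ≤ (k + 1) * (N.descFactorial k * ‖g.eval v‖) * ‖v - z‖
            + ‖v - z‖ * (N.descFactorial (k + 1) * ‖g.eval v‖) := by gcongr
      _ = ((k + 1) * N.descFactorial k + N.descFactorial (k + 1) : ℕ)
            * ‖((X - C z) * g).eval v‖ := by
          simp only [eval_mul, eval_sub, eval_X, eval_C, norm_mul]
          push_cast
          ring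

end Polynomial

open Metric

theorem natDegree_le_of_mem_Pn {n : ℕ} {f : ℂ[X]} (hf : f ∈ Pn n) : f.natDegree ≤ n := by
  rw [Pn, degreeLT_succ_eq_degreeLE, mem_degreeLE] at hf
  exact natDegree_le_iff_degree_le.2 hf

theorem coe_Dop_pow_apply (n k : ℕ) (f : Pn n) :
    (((Dop n ^ k) f : Pn n) : ℂ[X]) = derivative^[k] (f : ℂ[X]) := by
  induction k generalizing f with
  | zero => rfl
  | succ k ih => exact ih (Dop n f)

theorem coe_one_sub_smul_Dop_pow_apply (n k : ℕ) (γ : ℂ) (f : Pn n) :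
    (((1 - γ • Dop n ^ k) f : Pn n) : ℂ[X]) = f - C γ * derivative^[k] (f : ℂ[X]) := by
  rw [LinearMap.sub_apply, LinearMap.smul_apply, Module.End.one_apply, Submodule.coe_sub,
    Submodule.coe_smul, coe_Dop_pow_apply, smul_eq_C_mul]

theorem infDist_Zset_pow_le {f : ℂ[X]} {γ v : ℂ} {k : ℕ} (hk : k ≠ 0)
    (hv : f.eval v = γ * (derivative^[k] f).eval v) :
    infDist v (Zset f) ^ k ≤ ‖γ‖ * f.natDegree.descFactorial k := by
  by_cases hfv : f.eval v = 0
  · rw [infDist_zero_of_mem (show v ∈ Zset f from hfv), zero_pow hk]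
    positivity
  have hroots (z : ℂ) (hz : f.IsRoot z) : infDist v (Zset f) ≤ ‖v - z‖ :=
    (infDist_le_dist_of_mem (show z ∈ Zset f from hz)).trans_eq (Complex.dist_eq v z)
  have hbound := norm_eval_iterate_derivative_mul_pow_le infDist_nonneg hroots k
  refine le_of_mul_le_mul_left ?_ (norm_pos_iff.2 hfv)
  calc ‖f.eval v‖ * infDist v (Zset f) ^ k
      = ‖γ‖ * (‖(derivative^[k] f).eval v‖ * infDist v (Zset f) ^ k) := by
        rw [hv, norm_mul, mul_assoc]
    _ ≤ ‖γ‖ * (f.natDegree.descFactorial k * ‖f.eval v‖) := by gcongr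
    _ = ‖f.eval v‖ * (‖γ‖ * f.natDegree.descFactorial k) := by ring

theorem dh_Zset_one_sub_smul_Dop_pow_le (n : ℕ) {k : ℕ} (hk : k ≠ 0) (γ : ℂ) (f : Pn n) :
    dh (Zset f) (Zset ((1 - γ • Dop n ^ k) f : Pn n)) ≤
      (‖γ‖ * n.descFactorial k) ^ (k⁻¹ : ℝ) := by
  have hx : 0 ≤ ‖γ‖ * n.descFactorial k := by positivity
  refine Real.sSup_le ?_ (by positivity)
  rintro _ ⟨v, hv, rfl⟩
  have hv' : (f : ℂ[X]).eval v = γ * (derivative^[k] (f : ℂ[X])).eval v := by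
    rw [Zset, Set.mem_ofPred_eq, coe_one_sub_smul_Dop_pow_apply] at hv
    simpa only [IsRoot, eval_sub, eval_mul, eval_C, sub_eq_zero] using hv
  rw [Real.le_rpow_inv_iff_of_pos infDist_nonneg hx (by positivity), Real.rpow_natCast]
  refine (infDist_Zset_pow_le hk hv').trans ?_
  gcongr
  exact natDegree_le_of_mem_Pn f.2

theorem Zset_phiP {n : ℕ} (hn : n ≠ 0) : Zset (phiP n n le_rfl : ℂ[X]) = {0} := by
  ext z
  simp [Zset, phiP, hn, Nat.factorial_ne_zero]

theorem Zset_one_sub_smul_Dop_pow_phiP {n k : ℕ} (hk : k ≤ n) (γ : ℂ) :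
    Zset ((1 - γ • Dop n ^ k) (phiP n n le_rfl) : Pn n) =
      {z | z ^ (n - k) * (z ^ k - γ * n.descFactorial k) = 0} := by
  ext z
  rw [Zset, coe_one_sub_smul_Dop_pow_apply]
  simp only [phiP, iterate_derivative_C_mul, iterate_derivative_X_pow_eq_C_mul,
    Set.mem_ofPred_eq, IsRoot, eval_sub, eval_mul, eval_C, eval_pow, eval_X]
  have hc : ((n.factorial : ℂ))⁻¹ ≠ 0 := by simp [Nat.factorial_ne_zero]
  conv_rhs => rw [← mul_eq_zero_iff_left hc]
  rw [← pow_sub_mul_pow z hk]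
  ring_nf

theorem isGreatest_norm_pow_mul_pow_sub_eq_zero (m : ℕ) {k : ℕ} (hk : k ≠ 0) (w : ℂ) :
    IsGreatest ((‖·‖) '' {z : ℂ | z ^ m * (z ^ k - w) = 0}) (‖w‖ ^ (k⁻¹ : ℝ)) := by
  have hnorm {z : ℂ} (hz : z ^ k = w) : ‖z‖ = ‖w‖ ^ (k⁻¹ : ℝ) := by
    rw [← hz, norm_pow, Real.pow_rpow_inv_natCast (norm_nonneg z) hk]
  refine ⟨?_, ?_⟩
  · obtain ⟨z, hz⟩ := IsAlgClosed.exists_pow_nat_eq w (Nat.pos_of_ne_zero hk)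
    exact ⟨z, by simp [hz], hnorm hz⟩
  · rintro _ ⟨z, hz, rfl⟩
    rcases mul_eq_zero.1 hz with hz | hz
    · simp only [eq_zero_of_pow_eq_zero hz, norm_zero]
      positivity
    · exact (hnorm (sub_eq_zero.1 hz)).le

theorem dh_singleton_zero (B : Set ℂ) : dh {0} B = sSup ((‖·‖) '' B) := by
  simp [dh, infDist_singleton]

theorem Kh_Hk_general (n : ℕ) (k : ℕ) (hk1 : 1 ≤ k) (hk2 : k ≤ n) (γ : ℂ) :
    rootRadius (((1 - γ • (Dop n) ^ k) (phiP n n le_rfl) : Pn n) : Polynomial ℂ) =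
      (‖γ‖ * (Nat.factorial n : ℝ) / (Nat.factorial (n - k) : ℝ)) ^ (1 / (k : ℝ)) ∧
    Kh n (1 - γ • (Dop n) ^ k) =
      (‖γ‖ * (Nat.factorial n : ℝ) / (Nat.factorial (n - k) : ℝ)) ^ (1 / (k : ℝ)) := by
  have hk : k ≠ 0 := by omega
  have hradius : ‖γ‖ * (n.factorial : ℝ) / ((n - k).factorial : ℝ) = ‖γ‖ * n.descFactorial k := by
    rw [← Nat.factorial_mul_descFactorial hk2, Nat.cast_mul]
    field_simp
  have hroots := isGreatest_norm_pow_mul_pow_sub_eq_zero (n - k) hk (γ * n.descFactorial k)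
  rw [← Zset_one_sub_smul_Dop_pow_phiP hk2, norm_mul, Complex.norm_natCast] at hroots
  have hrootRadius := hroots.csSup_eq
  rw [hradius, one_div]
  refine ⟨hrootRadius, IsGreatest.csSup_eq ⟨⟨phiP n n le_rfl, ?_, ?_⟩, ?_⟩⟩
  · rw [phiP, degree_C_mul_X_pow n (by simp [Nat.factorial_ne_zero])]
    exact_mod_cast (by omega : 0 < n)
  · rw [Zset_phiP (by omega), dh_singleton_zero, ← hrootRadius]
  · rintro _ ⟨f, -, rfl⟩
    exact dh_Zset_one_sub_smul_Dop_pow_le n hk γ f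

/-- For `H_k(γ) = I - γ D^k` on `P_n` (`1 ≤ k ≤ n`), the root radius of `H_k(γ)φ_n`
equals `(|γ| n!/(n-k)!)^{1/k}`, and consequently `K_h(H_k(γ)) = (|γ| n!/(n-k)!)^{1/k}`. -/
theorem Kh_Hk (n : ℕ) (hn : 0 < n) (k : ℕ) (hk1 : 1 ≤ k) (hk2 : k ≤ n) (γ : ℂ) :
    rootRadius (((1 - γ • (Dop n) ^ k) (phiP n n le_rfl) : Pn n) : Polynomial ℂ) =
      (‖γ‖ * (Nat.factorial n : ℝ) / (Nat.factorial (n - k) : ℝ)) ^ (1 / (k : ℝ)) ∧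
    Kh n (1 - γ • (Dop n) ^ k) =
      (‖γ‖ * (Nat.factorial n : ℝ) / (Nat.factorial (n - k) : ℝ)) ^ (1 / (k : ℝ)) :=
  Kh_Hk_general n k hk1 hk2 γ
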